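/- arXiv:1210.0574 — 2 statements merged into one kernel-verified Lean document; each statement's English description precedes it below -/
import Mathlib

section
/- Expansion law for bounded Trigger: for every nonempty finite path ρ, every position i with 0 ≤ i < |ρ|, all formulas φ_l, φ_r, and every b ∈ ℕ: if b > 0 then (ρ,i) ⊨ φ_l T^b φ_r if and only if (ρ,i) ⊨ φ_r ∧ (φ_l ∨ Y∀ (φ_l T^{b−1} φ_r)), and if b = 0 then (ρ,i) ⊨ φ_l T^b φ_r if and only if (ρ,i) ⊨ φ_r. -/
/-- BLTL+Past formulas over atomic propositions `P`. -/
inductive LTLFormula (P : Type*) : Type _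
  | atom : P → LTLFormula P
  | neg : LTLFormula P → LTLFormula P
  | conj : LTLFormula P → LTLFormula P → LTLFormula P
  | disj : LTLFormula P → LTLFormula P → LTLFormula P
  | nextE : LTLFormula P → LTLFormula P          -- strong Next X∃
  | nextA : LTLFormula P → LTLFormula P          -- weak Next X∀
  | yestE : LTLFormula P → LTLFormula P          -- strong Yesterday Y∃
  | yestA : LTLFormula P → LTLFormula P          -- weak Yesterday Y∀
  | untl : LTLFormula P → LTLFormula P → LTLFormula P       -- U
  | release : LTLFormula P → LTLFormula P → LTLFormula P    -- R
  | since : LTLFormula P → LTLFormula P → LTLFormula P      -- S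
  | trigger : LTLFormula P → LTLFormula P → LTLFormula P    -- T
  | buntl : ℕ → LTLFormula P → LTLFormula P → LTLFormula P     -- U^b
  | brelease : ℕ → LTLFormula P → LTLFormula P → LTLFormula P  -- R^b
  | bsince : ℕ → LTLFormula P → LTLFormula P → LTLFormula P    -- S^b
  | btrigger : ℕ → LTLFormula P → LTLFormula P → LTLFormula P  -- T^b

/-- Satisfaction `(ρ,i) ⊨ φ` for a nonempty finite path `ρ` given as a list of
states (valuations of the atomic propositions). -/
def LTLFormula.Sat {P : Type*} (ρ : List (Set P)) : LTLFormula P → ℕ → Prop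
  | .atom p, i => p ∈ ρ.getD i ∅
  | .neg φ, i => ¬ LTLFormula.Sat ρ φ i
  | .conj φ ψ, i => LTLFormula.Sat ρ φ i ∧ LTLFormula.Sat ρ ψ i
  | .disj φ ψ, i => LTLFormula.Sat ρ φ i ∨ LTLFormula.Sat ρ ψ i
  | .nextE φ, i => i + 1 < ρ.length ∧ LTLFormula.Sat ρ φ (i + 1)
  | .nextA φ, i => i + 1 = ρ.length ∨ LTLFormula.Sat ρ φ (i + 1)
  | .yestE φ, i => 1 ≤ i ∧ LTLFormula.Sat ρ φ (i - 1)
  | .yestA φ, i => i = 0 ∨ LTLFormula.Sat ρ φ (i - 1)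
  | .untl φ ψ, i =>
      ∃ j, i ≤ j ∧ j < ρ.length ∧ LTLFormula.Sat ρ ψ j ∧
        ∀ k, i ≤ k → k < j → LTLFormula.Sat ρ φ k
  | .release φ ψ, i =>
      ∀ j, i ≤ j → j < ρ.length →
        LTLFormula.Sat ρ ψ j ∨ ∃ k, i ≤ k ∧ k < j ∧ LTLFormula.Sat ρ φ k
  | .since φ ψ, i =>
      ∃ j, j ≤ i ∧ LTLFormula.Sat ρ ψ j ∧
        ∀ k, j < k → k ≤ i → LTLFormula.Sat ρ φ k
  | .trigger φ ψ, i =>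
      ∀ j, j ≤ i →
        LTLFormula.Sat ρ ψ j ∨ ∃ k, j < k ∧ k ≤ i ∧ LTLFormula.Sat ρ φ k
  | .buntl b φ ψ, i =>
      ∃ j, i ≤ j ∧ j ≤ min (i + b) (ρ.length - 1) ∧ LTLFormula.Sat ρ ψ j ∧
        ∀ k, i ≤ k → k < j → LTLFormula.Sat ρ φ k
  | .brelease b φ ψ, i =>
      ∀ j, i ≤ j → j ≤ min (i + b) (ρ.length - 1) →
        LTLFormula.Sat ρ ψ j ∨ ∃ k, i ≤ k ∧ k < j ∧ LTLFormula.Sat ρ φ k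
  | .bsince b φ ψ, i =>
      ∃ j, i - b ≤ j ∧ j ≤ i ∧ LTLFormula.Sat ρ ψ j ∧
        ∀ k, j < k → k ≤ i → LTLFormula.Sat ρ φ k
  | .btrigger b φ ψ, i =>
      ∀ j, i - b ≤ j → j ≤ i →
        LTLFormula.Sat ρ ψ j ∨ ∃ k, j < k ∧ k ≤ i ∧ LTLFormula.Sat ρ φ k

theorem btrigger_expansion {P : Type*} (ρ : List (Set P)) (hρ : ρ ≠ [])
    (i : ℕ) (hi : i < ρ.length) (φl φr : LTLFormula P) (b : ℕ) :
    (b > 0 →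
      (LTLFormula.Sat ρ (.btrigger b φl φr) i ↔
        LTLFormula.Sat ρ (.conj φr (.disj φl (.yestA (.btrigger (b - 1) φl φr)))) i)) ∧
    (b = 0 →
      (LTLFormula.Sat ρ (.btrigger b φl φr) i ↔ LTLFormula.Sat ρ φr i)) := by
  constructor
  · intro hb
    constructor
    · intro h
      refine ⟨?_, ?_⟩
      · rcases h i (by omega) le_rfl with h' | ⟨k, hk1, hk2, _⟩
        · exact h'
        · omega
      · simp only [LTLFormula.Sat]
        by_cases hl : LTLFormula.Sat ρ φl i
        · exact Or.inl hl
        · right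
          rcases Nat.eq_zero_or_pos i with hi0 | hi0
          · exact Or.inl hi0
          · right
            intro j hj1 hj2
            rcases h j (by omega) (by omega) with h' | ⟨k, hk1, hk2, hk3⟩
            · exact Or.inl h'
            · right
              refine ⟨k, hk1, ?_, hk3⟩
              rcases Nat.lt_or_ge k i with hki | hki
              · omega
              · have hk : k = i := by omega
                subst hk
                exact absurd hk3 hl
    · rintro ⟨hr, hrest⟩ j hj1 hj2
      rcases Nat.eq_or_lt_of_le hj2 with rfl | hji
      · exact Or.inl hr
      · simp only [LTLFormula.Sat] at hrest
        rcases hrest with hl | hi0 | hT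
        · exact Or.inr ⟨i, hji, le_rfl, hl⟩
        · omega
        · rcases hT j (by omega) (by omega) with h' | ⟨k, hk1, hk2, hk3⟩
          · exact Or.inl h'
          · exact Or.inr ⟨k, hk1, by omega, hk3⟩
  · rintro rfl
    constructor
    · intro h
      rcases h i (by omega) le_rfl with h' | ⟨k, hk1, hk2, _⟩
      · exact h'
      · omega
    · intro h j hj1 hj2
      have : j = i := by omega
      subst this
      exact Or.inl h
end

section
/- Bound pruning (Lemma 2.1): let φ be a BLTL+Past formula and ρ a nonempty finite path, and let φ' be the formula obtained from φ by replacing every bound n occurring in φ (in any of the operators U^n, R^n, S^n, T^n) by min(n, |ρ|). Then ρ ⊨ φ if and only if ρ ⊨ φ', where ρ ⊨ ψ means (ρ,0) ⊨ ψ. -/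
/-- Replace every bound `n` occurring in the formula by `min n m`. -/
def LTLFormula.prune {P : Type*} (m : ℕ) : LTLFormula P → LTLFormula P
  | .atom p => .atom p
  | .neg φ => .neg (LTLFormula.prune m φ)
  | .conj φ ψ => .conj (LTLFormula.prune m φ) (LTLFormula.prune m ψ)
  | .disj φ ψ => .disj (LTLFormula.prune m φ) (LTLFormula.prune m ψ)
  | .nextE φ => .nextE (LTLFormula.prune m φ)
  | .nextA φ => .nextA (LTLFormula.prune m φ)
  | .yestE φ => .yestE (LTLFormula.prune m φ)
  | .yestA φ => .yestA (LTLFormula.prune m φ)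
  | .untl φ ψ => .untl (LTLFormula.prune m φ) (LTLFormula.prune m ψ)
  | .release φ ψ => .release (LTLFormula.prune m φ) (LTLFormula.prune m ψ)
  | .since φ ψ => .since (LTLFormula.prune m φ) (LTLFormula.prune m ψ)
  | .trigger φ ψ => .trigger (LTLFormula.prune m φ) (LTLFormula.prune m ψ)
  | .buntl b φ ψ => .buntl (min b m) (LTLFormula.prune m φ) (LTLFormula.prune m ψ)
  | .brelease b φ ψ => .brelease (min b m) (LTLFormula.prune m φ) (LTLFormula.prune m ψ)
  | .bsince b φ ψ => .bsince (min b m) (LTLFormula.prune m φ) (LTLFormula.prune m ψ)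
  | .btrigger b φ ψ => .btrigger (min b m) (LTLFormula.prune m φ) (LTLFormula.prune m ψ)

theorem bound_pruning_aux {P : Type*} (ρ : List (Set P)) (φ : LTLFormula P) :
    ∀ i, i < ρ.length →
      (LTLFormula.Sat ρ φ i ↔ LTLFormula.Sat ρ (LTLFormula.prune ρ.length φ) i) := by
  induction φ with
  | atom p => intro i hi; rfl
  | neg φ ih => intro i hi; simp [LTLFormula.Sat, LTLFormula.prune, ih i hi]
  | conj φ ψ ihφ ihψ => intro i hi; simp [LTLFormula.Sat, LTLFormula.prune, ihφ i hi, ihψ i hi]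
  | disj φ ψ ihφ ihψ => intro i hi; simp [LTLFormula.Sat, LTLFormula.prune, ihφ i hi, ihψ i hi]
  | nextE φ ih =>
    intro i hi
    simp only [LTLFormula.Sat, LTLFormula.prune]
    constructor
    · rintro ⟨h1, h2⟩; exact ⟨h1, (ih _ h1).1 h2⟩
    · rintro ⟨h1, h2⟩; exact ⟨h1, (ih _ h1).2 h2⟩
  | nextA φ ih =>
    intro i hi
    simp only [LTLFormula.Sat, LTLFormula.prune]
    rcases Nat.eq_or_lt_of_le (Nat.succ_le_of_lt hi) with h | h
    · constructor <;> intro _ <;> exact Or.inl h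
    · constructor
      · rintro (h1 | h2)
        · exact Or.inl h1
        · exact Or.inr ((ih _ h).1 h2)
      · rintro (h1 | h2)
        · exact Or.inl h1
        · exact Or.inr ((ih _ h).2 h2)
  | yestE φ ih =>
    intro i hi
    simp only [LTLFormula.Sat, LTLFormula.prune]
    constructor
    · rintro ⟨h1, h2⟩; exact ⟨h1, (ih _ (by omega)).1 h2⟩
    · rintro ⟨h1, h2⟩; exact ⟨h1, (ih _ (by omega)).2 h2⟩
  | yestA φ ih =>
    intro i hi
    simp only [LTLFormula.Sat, LTLFormula.prune]
    constructor
    · rintro (h1 | h2)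
      · exact Or.inl h1
      · exact Or.inr ((ih _ (by omega)).1 h2)
    · rintro (h1 | h2)
      · exact Or.inl h1
      · exact Or.inr ((ih _ (by omega)).2 h2)
  | untl φ ψ ihφ ihψ =>
    intro i hi
    simp only [LTLFormula.Sat, LTLFormula.prune]
    constructor
    · rintro ⟨j, h1, h2, h3, h4⟩
      exact ⟨j, h1, h2, (ihψ j h2).1 h3, fun k hk1 hk2 => (ihφ k (by omega)).1 (h4 k hk1 hk2)⟩
    · rintro ⟨j, h1, h2, h3, h4⟩
      exact ⟨j, h1, h2, (ihψ j h2).2 h3, fun k hk1 hk2 => (ihφ k (by omega)).2 (h4 k hk1 hk2)⟩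
  | release φ ψ ihφ ihψ =>
    intro i hi
    simp only [LTLFormula.Sat, LTLFormula.prune]
    constructor
    · intro h j hj1 hj2
      rcases h j hj1 hj2 with h1 | ⟨k, hk1, hk2, hk3⟩
      · exact Or.inl ((ihψ j hj2).1 h1)
      · exact Or.inr ⟨k, hk1, hk2, (ihφ k (by omega)).1 hk3⟩
    · intro h j hj1 hj2
      rcases h j hj1 hj2 with h1 | ⟨k, hk1, hk2, hk3⟩
      · exact Or.inl ((ihψ j hj2).2 h1)
      · exact Or.inr ⟨k, hk1, hk2, (ihφ k (by omega)).2 hk3⟩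
  | since φ ψ ihφ ihψ =>
    intro i hi
    simp only [LTLFormula.Sat, LTLFormula.prune]
    constructor
    · rintro ⟨j, h1, h2, h3⟩
      exact ⟨j, h1, (ihψ j (by omega)).1 h2, fun k hk1 hk2 => (ihφ k (by omega)).1 (h3 k hk1 hk2)⟩
    · rintro ⟨j, h1, h2, h3⟩
      exact ⟨j, h1, (ihψ j (by omega)).2 h2, fun k hk1 hk2 => (ihφ k (by omega)).2 (h3 k hk1 hk2)⟩
  | trigger φ ψ ihφ ihψ =>
    intro i hi
    simp only [LTLFormula.Sat, LTLFormula.prune]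
    constructor
    · intro h j hj
      rcases h j hj with h1 | ⟨k, hk1, hk2, hk3⟩
      · exact Or.inl ((ihψ j (by omega)).1 h1)
      · exact Or.inr ⟨k, hk1, hk2, (ihφ k (by omega)).1 hk3⟩
    · intro h j hj
      rcases h j hj with h1 | ⟨k, hk1, hk2, hk3⟩
      · exact Or.inl ((ihψ j (by omega)).2 h1)
      · exact Or.inr ⟨k, hk1, hk2, (ihφ k (by omega)).2 hk3⟩
  | buntl b φ ψ ihφ ihψ =>
    intro i hi
    simp only [LTLFormula.Sat, LTLFormula.prune]
    constructor
    · rintro ⟨j, h1, h2, h3, h4⟩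
      refine ⟨j, h1, by omega, (ihψ j (by omega)).1 h3,
        fun k hk1 hk2 => (ihφ k (by omega)).1 (h4 k hk1 hk2)⟩
    · rintro ⟨j, h1, h2, h3, h4⟩
      refine ⟨j, h1, by omega, (ihψ j (by omega)).2 h3,
        fun k hk1 hk2 => (ihφ k (by omega)).2 (h4 k hk1 hk2)⟩
  | brelease b φ ψ ihφ ihψ =>
    intro i hi
    simp only [LTLFormula.Sat, LTLFormula.prune]
    constructor
    · intro h j hj1 hj2
      rcases h j hj1 (by omega) with h1 | ⟨k, hk1, hk2, hk3⟩
      · exact Or.inl ((ihψ j (by omega)).1 h1)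
      · exact Or.inr ⟨k, hk1, hk2, (ihφ k (by omega)).1 hk3⟩
    · intro h j hj1 hj2
      rcases h j hj1 (by omega) with h1 | ⟨k, hk1, hk2, hk3⟩
      · exact Or.inl ((ihψ j (by omega)).2 h1)
      · exact Or.inr ⟨k, hk1, hk2, (ihφ k (by omega)).2 hk3⟩
  | bsince b φ ψ ihφ ihψ =>
    intro i hi
    simp only [LTLFormula.Sat, LTLFormula.prune]
    constructor
    · rintro ⟨j, h1, h2, h3, h4⟩
      exact ⟨j, by omega, h2, (ihψ j (by omega)).1 h3,
        fun k hk1 hk2 => (ihφ k (by omega)).1 (h4 k hk1 hk2)⟩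
    · rintro ⟨j, h1, h2, h3, h4⟩
      exact ⟨j, by omega, h2, (ihψ j (by omega)).2 h3,
        fun k hk1 hk2 => (ihφ k (by omega)).2 (h4 k hk1 hk2)⟩
  | btrigger b φ ψ ihφ ihψ =>
    intro i hi
    simp only [LTLFormula.Sat, LTLFormula.prune]
    constructor
    · intro h j hj1 hj2
      rcases h j (by omega) hj2 with h1 | ⟨k, hk1, hk2, hk3⟩
      · exact Or.inl ((ihψ j (by omega)).1 h1)
      · exact Or.inr ⟨k, hk1, hk2, (ihφ k (by omega)).1 hk3⟩
    · intro h j hj1 hj2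
      rcases h j (by omega) hj2 with h1 | ⟨k, hk1, hk2, hk3⟩
      · exact Or.inl ((ihψ j (by omega)).2 h1)
      · exact Or.inr ⟨k, hk1, hk2, (ihφ k (by omega)).2 hk3⟩

theorem bound_pruning {P : Type*} (φ : LTLFormula P) (ρ : List (Set P)) (hρ : ρ ≠ []) :
    LTLFormula.Sat ρ φ 0 ↔ LTLFormula.Sat ρ (LTLFormula.prune ρ.length φ) 0 := by
  have h : 0 < ρ.length := List.length_pos_iff.mpr hρ
  exact bound_pruning_aux ρ φ 0 h
end
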